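/- Let V be a finite-dimensional complex inner product space with dim_ℂ V = n ≥ 1 and R a Kähler curvature tensor on V with semi-positive holomorphic sectional curvature. Then for any orthonormal basis e_1, …, e_n of V, the scalar quantity S(R) = Σ_{i,j=1}^{n} R(e_i,e_i,e_j,e_j) satisfies S(R) ≥ 0; and if in addition R(v₀,v₀,v₀,v₀) > 0 for some v₀ ∈ V, then S(R) > 0. -/

import Mathlib

/-- A Kähler curvature tensor on a complex inner product space `V`:
`ℂ`-linear in the 1st and 3rd arguments, conjugate-linear in the 2nd and 4th,
with the symmetries of the curvature tensor of a Kähler metric at a point. -/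
structure KahlerCurvatureTensor (V : Type*) [NormedAddCommGroup V]
    [InnerProductSpace ℂ V] where
  R : V → V → V → V → ℂ
  map_add₁ : ∀ x x' y z w, R (x + x') y z w = R x y z w + R x' y z w
  map_smul₁ : ∀ (c : ℂ) (x y z w : V), R (c • x) y z w = c * R x y z w
  map_add₂ : ∀ x y y' z w, R x (y + y') z w = R x y z w + R x y' z w
  map_smul₂ : ∀ (c : ℂ) (x y z w : V), R x (c • y) z w = (starRingEnd ℂ) c * R x y z w
  map_add₃ : ∀ x y z z' w, R x y (z + z') w = R x y z w + R x y z' w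
  map_smul₃ : ∀ (c : ℂ) (x y z w : V), R x y (c • z) w = c * R x y z w
  map_add₄ : ∀ x y z w w', R x y z (w + w') = R x y z w + R x y z w'
  map_smul₄ : ∀ (c : ℂ) (x y z w : V), R x y z (c • w) = (starRingEnd ℂ) c * R x y z w
  symm_pair : ∀ x y z w, R x y z w = R z w x y
  symm_exch : ∀ x y z w, R x y z w = R z y x w
  symm_conj : ∀ x y z w, (starRingEnd ℂ) (R x y z w) = R y x w z

namespace KahlerCurvatureTensor

variable {V : Type*} [NormedAddCommGroup V] [InnerProductSpace ℂ V]
variable (T : KahlerCurvatureTensor V)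

lemma sum₁ {ι : Type*} (s : Finset ι) (f : ι → V) (y z w : V) :
    T.R (∑ i ∈ s, f i) y z w = ∑ i ∈ s, T.R (f i) y z w := by
  classical
  induction s using Finset.cons_induction with
  | empty =>
      have : T.R (0 : V) y z w = 0 := by
        have := T.map_smul₁ 0 0 y z w
        simpa using this
      simpa using this
  | cons a s ha ih =>
      rw [Finset.sum_cons, T.map_add₁, ih, Finset.sum_cons]

lemma sum₂ {ι : Type*} (s : Finset ι) (x : V) (f : ι → V) (z w : V) :
    T.R x (∑ i ∈ s, f i) z w = ∑ i ∈ s, T.R x (f i) z w := by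
  classical
  induction s using Finset.cons_induction with
  | empty =>
      have : T.R x (0 : V) z w = 0 := by
        have := T.map_smul₂ 0 x 0 z w
        simpa using this
      simpa using this
  | cons a s ha ih =>
      rw [Finset.sum_cons, T.map_add₂, ih, Finset.sum_cons]

lemma sum₃ {ι : Type*} (s : Finset ι) (x y : V) (f : ι → V) (w : V) :
    T.R x y (∑ i ∈ s, f i) w = ∑ i ∈ s, T.R x y (f i) w := by
  classical
  induction s using Finset.cons_induction with
  | empty =>
      have : T.R x y (0 : V) w = 0 := by
        have := T.map_smul₃ 0 x y 0 w
        simpa using this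
      simpa using this
  | cons a s ha ih =>
      rw [Finset.sum_cons, T.map_add₃, ih, Finset.sum_cons]

lemma sum₄ {ι : Type*} (s : Finset ι) (x y z : V) (f : ι → V) :
    T.R x y z (∑ i ∈ s, f i) = ∑ i ∈ s, T.R x y z (f i) := by
  classical
  induction s using Finset.cons_induction with
  | empty =>
      have : T.R x y z (0 : V) = 0 := by
        have := T.map_smul₄ 0 x y z 0
        simpa using this
      simpa using this
  | cons a s ha ih =>
      rw [Finset.sum_cons, T.map_add₄, ih, Finset.sum_cons]

/-- diagonal values are real -/
lemma diag_real (u x : V) : T.R u u x x = ((T.R u u x x).re : ℂ) := by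
  have h := T.symm_conj u u x x
  exact (Complex.conj_eq_iff_re.mp h).symm

end KahlerCurvatureTensor


lemma real_quartic_coeff {a b c d : ℝ}
    (h : ∀ t : ℝ, 0 ≤ b * t + a * t ^ 2 + c * t ^ 3 + d * t ^ 4) : 0 ≤ a := by
  have key : ∀ t : ℝ, 0 < t → 0 ≤ a + d * t ^ 2 := by
    intro t ht
    have h1 := h t
    have h2 := h (-t)
    nlinarith [sq_nonneg t, pow_pos ht 2]
  by_contra ha
  push_neg at ha
  set r := -a / (2 * (|d| + 1)) with hrdef
  have hden : (0:ℝ) < 2 * (|d| + 1) := by positivity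
  have hr : 0 < r := div_pos (by linarith) hden
  have hr2 : r * (2 * (|d| + 1)) = -a := div_mul_cancel₀ _ (ne_of_gt hden)
  have ht : 0 < Real.sqrt r := Real.sqrt_pos.mpr hr
  have hsq : Real.sqrt r ^ 2 = r := Real.sq_sqrt hr.le
  have hk := key (Real.sqrt r) ht
  rw [hsq] at hk
  have hdr : d * r ≤ |d| * r := mul_le_mul_of_nonneg_right (le_abs_self d) hr.le
  nlinarith [hk, hr2, hdr, hr, abs_nonneg d]

lemma real_quad_zero {a b : ℝ} (ha : 0 ≤ a)
    (h : ∀ t : ℝ, 0 ≤ b * t + a * t ^ 2) : b = 0 := by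
  set t := -b / (a + 1) with htdef
  have h2 : (0:ℝ) < a + 1 := by linarith
  have ht : t * (a + 1) = -b := div_mul_cancel₀ _ (ne_of_gt h2)
  have h1 := h t
  have ht0 : t = 0 := by nlinarith [sq_nonneg t, h1, ht]
  have : -b = 0 := by rw [← ht, ht0]; ring
  linarith

lemma cpoly_quad_coeff {W P Q R' S' : ℂ} (hW : W.re = 0)
    (h : ∀ t : ℝ, 0 ≤ (W + (t:ℂ) * P + (t:ℂ)^2 * Q + (t:ℂ)^3 * R' + (t:ℂ)^4 * S').re) :
    0 ≤ Q.re := by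
  apply real_quartic_coeff (b := P.re) (c := R'.re) (d := S'.re)
  intro t
  have := h t
  simp only [Complex.add_re, ← Complex.ofReal_pow, Complex.re_ofReal_mul, hW] at this
  linarith [this]


/-- the fourth roots of unity -/
def omegaPhase : Fin 4 → ℂ := ![1, Complex.I, -1, -Complex.I]

lemma omega_sum_pow {p q : ℕ} (hp : p ≤ 2) (hq : q ≤ 2) :
    ∑ k : Fin 4, omegaPhase k ^ p * (starRingEnd ℂ) (omegaPhase k) ^ q
      = if p = q then 4 else 0 := by
  interval_cases p <;> interval_cases q <;>
    simp [omegaPhase, Fin.sum_univ_four, Complex.conj_I, Complex.ext_iff] <;>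
    norm_num

lemma ind_eq_iff {α : Type*} [DecidableEq α] (a b c d : α) :
    (∀ i : α, ((if a = i then 1 else 0) + (if c = i then 1 else 0) : ℕ)
        = (if b = i then 1 else 0) + (if d = i then 1 else 0))
      ↔ ((a = b ∧ c = d) ∨ (a = d ∧ c = b)) := by
  constructor
  · intro h
    by_cases hab : a = b
    · left
      refine ⟨hab, ?_⟩
      have hc := h c
      by_cases hdc : d = c
      · exact hdc.symm
      · exfalso
        by_cases hac : a = c <;> by_cases hbc : b = c <;> simp_all
    · by_cases hcb : c = b
      · right
        refine ⟨?_, hcb⟩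
        have ha := h a
        by_cases hda : d = a
        · exact hda.symm
        · exfalso
          by_cases hca : c = a <;> by_cases hba : b = a <;> simp_all
      · exfalso
        have hb := h b
        by_cases hdb : d = b <;> by_cases hab' : a = b <;> by_cases hcb' : c = b <;> simp_all
  · rintro (⟨rfl, rfl⟩ | ⟨rfl, rfl⟩) i <;> by_cases h1 : a = i <;> by_cases h2 : c = i <;>
      simp_all

lemma prod_ite_all {n : ℕ} (P : Fin n → Prop) [DecidablePred P] :
    (∏ i : Fin n, if P i then (4:ℂ) else 0) = if ∀ i, P i then (4:ℂ)^n else 0 := by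
  by_cases h : ∀ i, P i
  · rw [if_pos h]
    rw [Finset.prod_congr rfl (fun i _ => if_pos (h i))]
    simp
  · rw [if_neg h]
    push_neg at h
    obtain ⟨i0, hi0⟩ := h
    exact Finset.prod_eq_zero (Finset.mem_univ i0) (by simp [hi0])

lemma phase_factor {n : ℕ} (a b c d : Fin n) (θ : Fin n → Fin 4) :
    omegaPhase (θ a) * (starRingEnd ℂ) (omegaPhase (θ b)) * omegaPhase (θ c)
        * (starRingEnd ℂ) (omegaPhase (θ d))
      = ∏ i : Fin n, (omegaPhase (θ i) ^ ((if a = i then 1 else 0) + (if c = i then 1 else 0))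
          * (starRingEnd ℂ) (omegaPhase (θ i))
              ^ ((if b = i then 1 else 0) + (if d = i then 1 else 0))) := by
  rw [Finset.prod_mul_distrib]
  simp only [pow_add]
  rw [Finset.prod_mul_distrib, Finset.prod_mul_distrib]
  simp only [pow_ite, pow_one, pow_zero]
  rw [Finset.prod_ite_eq, Finset.prod_ite_eq, Finset.prod_ite_eq, Finset.prod_ite_eq]
  simp only [Finset.mem_univ, if_true]
  ring

lemma coef_eval {n : ℕ} (a b c d : Fin n) :
    (∑ θ : Fin n → Fin 4, omegaPhase (θ a) * (starRingEnd ℂ) (omegaPhase (θ b))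
        * omegaPhase (θ c) * (starRingEnd ℂ) (omegaPhase (θ d)))
      = if (a = b ∧ c = d) ∨ (a = d ∧ c = b) then (4:ℂ)^n else 0 := by
  rw [Finset.sum_congr rfl (fun θ _ => phase_factor a b c d θ)]
  rw [← Fintype.piFinset_univ]
  rw [← Finset.prod_univ_sum (fun _ : Fin n => (Finset.univ : Finset (Fin 4)))
    (fun i k => omegaPhase k ^ ((if a = i then 1 else 0) + (if c = i then 1 else 0))
      * (starRingEnd ℂ) (omegaPhase k) ^ ((if b = i then 1 else 0) + (if d = i then 1 else 0)))]
  have hstep : ∀ i : Fin n,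
      (∑ k : Fin 4, omegaPhase k ^ ((if a = i then 1 else 0) + (if c = i then 1 else 0))
          * (starRingEnd ℂ) (omegaPhase k) ^ ((if b = i then 1 else 0) + (if d = i then 1 else 0)))
      = if ((if a = i then 1 else 0) + (if c = i then 1 else 0) : ℕ)
            = (if b = i then 1 else 0) + (if d = i then 1 else 0) then (4:ℂ) else 0 := by
    intro i
    apply omega_sum_pow
    · by_cases h1 : a = i <;> by_cases h2 : c = i <;> simp [h1, h2]
    · by_cases h1 : b = i <;> by_cases h2 : d = i <;> simp [h1, h2]
  rw [Finset.prod_congr rfl (fun i _ => hstep i)]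
  rw [prod_ite_all]
  congr 1
  exact propext (ind_eq_iff a b c d)


lemma ite_or_split {α : Type*} [DecidableEq α] (a b c d : α) (X z : ℂ) :
    (if (a = b ∧ c = d) ∨ (a = d ∧ c = b) then X else 0) * z
      = X * ((if c = d then (if a = b then z else 0) else 0)
          + (if a = d then (if c = b then z else 0) else 0)
          - (if a = d then (if a = c then (if a = b then z else 0) else 0) else 0)) := by
  by_cases h1 : a = b <;> by_cases h2 : c = d <;> by_cases h3 : a = d <;>
    by_cases h4 : c = b <;> by_cases h5 : a = c <;> simp_all

namespace KahlerCurvatureTensor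
variable {V : Type*} [NormedAddCommGroup V] [InnerProductSpace ℂ V]
variable (T : KahlerCurvatureTensor V)

lemma expand_two (c : ℂ) (x y : V) :
    T.R (x + c • y) (x + c • y) (x + c • y) (x + c • y) =
      T.R x x x x
      + c * (T.R y x x x + T.R x x y x)
      + (starRingEnd ℂ) c * (T.R x y x x + T.R x x x y)
      + c^2 * T.R y x y x
      + ((starRingEnd ℂ) c)^2 * T.R x y x y
      + c * (starRingEnd ℂ) c * (T.R y y x x + T.R y x x y + T.R x y y x + T.R x x y y)
      + c^2 * (starRingEnd ℂ) c * (T.R y y y x + T.R y x y y)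
      + c * ((starRingEnd ℂ) c)^2 * (T.R y y x y + T.R x y y y)
      + c^2 * ((starRingEnd ℂ) c)^2 * T.R y y y y := by
  simp only [T.map_add₁, T.map_add₂, T.map_add₃, T.map_add₄,
    T.map_smul₁, T.map_smul₂, T.map_smul₃, T.map_smul₄]
  ring

lemma diag_nonneg_of_min (hsp : ∀ u : V, 0 ≤ (T.R u u u u).re)
    {u : V} (hu : (T.R u u u u).re = 0) (x : V) : 0 ≤ (T.R u u x x).re := by
  have key1 : ∀ t : ℝ, T.R (u + (t:ℂ) • x) (u + (t:ℂ) • x) (u + (t:ℂ) • x) (u + (t:ℂ) • x)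
      = T.R u u u u
        + (t:ℂ) * (T.R x u u u + T.R u u x u + T.R u x u u + T.R u u u x)
        + (t:ℂ)^2 * (T.R x u x u + T.R u x u x
            + (T.R x x u u + T.R x u u x + T.R u x x u + T.R u u x x))
        + (t:ℂ)^3 * (T.R x x x u + T.R x u x x + T.R x x u x + T.R u x x x)
        + (t:ℂ)^4 * T.R x x x x := by
    intro t
    rw [T.expand_two]
    simp only [Complex.conj_ofReal]
    ring
  have key2 : ∀ t : ℝ, T.R (u + ((t:ℂ)*Complex.I) • x) (u + ((t:ℂ)*Complex.I) • x)
        (u + ((t:ℂ)*Complex.I) • x) (u + ((t:ℂ)*Complex.I) • x)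
      = T.R u u u u
        + (t:ℂ) * (Complex.I * (T.R x u u u + T.R u u x u)
            - Complex.I * (T.R u x u u + T.R u u u x))
        + (t:ℂ)^2 * (Complex.I^2 * (T.R x u x u + T.R u x u x)
            - Complex.I^2 * (T.R x x u u + T.R x u u x + T.R u x x u + T.R u u x x))
        + (t:ℂ)^3 * (Complex.I^3 * (T.R x x u x + T.R u x x x)
            - Complex.I^3 * (T.R x x x u + T.R x u x x))
        + (t:ℂ)^4 * (Complex.I^4 * T.R x x x x) := by
    intro t
    rw [T.expand_two]
    simp only [map_mul, Complex.conj_ofReal, Complex.conj_I]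
    ring
  have q1 : 0 ≤ ((T.R x u x u + T.R u x u x
      + (T.R x x u u + T.R x u u x + T.R u x x u + T.R u u x x))).re := by
    apply cpoly_quad_coeff hu
    intro t
    rw [← key1 t]
    exact hsp _
  have q2 : 0 ≤ ((Complex.I^2 * (T.R x u x u + T.R u x u x)
      - Complex.I^2 * (T.R x x u u + T.R x u u x + T.R u x x u + T.R u u x x))).re := by
    apply cpoly_quad_coeff hu
    intro t
    rw [← key2 t]
    exact hsp _
  have hq2' : (Complex.I^2 * (T.R x u x u + T.R u x u x)
      - Complex.I^2 * (T.R x x u u + T.R x u u x + T.R u x x u + T.R u u x x))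
      = (T.R x x u u + T.R x u u x + T.R u x x u + T.R u u x x)
        - (T.R x u x u + T.R u x u x) := by
    rw [Complex.I_sq]; ring
  rw [hq2'] at q2
  have e1 : T.R x x u u = T.R u u x x := T.symm_pair x x u u
  have e2 : T.R x u u x = T.R u u x x := T.symm_exch x u u x
  have e3 : T.R u x x u = T.R x x u u := T.symm_exch u x x u
  have hsum : (T.R x u x u + T.R u x u x
        + (T.R x x u u + T.R x u u x + T.R u x x u + T.R u u x x)).re
      + ((T.R x x u u + T.R x u u x + T.R u x x u + T.R u u x x)
        - (T.R x u x u + T.R u x u x)).re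
      = 8 * (T.R u u x x).re := by
    rw [← Complex.add_re]
    have heq : (T.R x u x u + T.R u x u x
        + (T.R x x u u + T.R x u u x + T.R u x x u + T.R u u x x))
      + ((T.R x x u u + T.R x u u x + T.R u x x u + T.R u u x x)
        - (T.R x u x u + T.R u x u x))
      = 8 * T.R u u x x := by
      rw [e1, e2, e3, e1]; ring
    rw [heq]
    simp [Complex.mul_re]
  linarith

/-- Cauchy–Schwarz style: PSD diagonal zero kills the row. -/
lemma offdiag_zero (v : V) (hpsd : ∀ x : V, 0 ≤ (T.R v v x x).re)
    {u : V} (hu : (T.R v v u u).re = 0) (y : V) : T.R v v u y = 0 := by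
  have main : ∀ y : V, (T.R v v u y).re = 0 := by
    intro y
    have expand : ∀ t : ℝ, T.R v v (u + (t:ℂ) • y) (u + (t:ℂ) • y)
        = T.R v v u u + (t:ℂ) * (T.R v v u y + T.R v v y u) + (t:ℂ)^2 * T.R v v y y := by
      intro t
      simp only [T.map_add₃, T.map_add₄, T.map_smul₃, T.map_smul₄, Complex.conj_ofReal]
      ring
    have hconj : T.R v v y u = (starRingEnd ℂ) (T.R v v u y) := (T.symm_conj v v u y).symm
    have hb : (2 : ℝ) * (T.R v v u y).re = 0 := by
      apply real_quad_zero (a := (T.R v v y y).re) (hpsd y)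
      intro t
      have h0 := hpsd (u + (t:ℂ) • y)
      rw [expand t] at h0
      simp only [Complex.add_re, ← Complex.ofReal_pow, Complex.re_ofReal_mul, hu,
        Complex.add_re, hconj, Complex.conj_re] at h0
      linarith
    linarith
  have h1 := main y
  have h2 := main (Complex.I • y)
  rw [T.map_smul₄, Complex.conj_I] at h2
  -- h2 : (-I * R).re = 0  gives Im = 0
  apply Complex.ext
  · simpa using h1
  · simp only [Complex.mul_re, Complex.neg_re, Complex.neg_im, Complex.I_re, Complex.I_im] at h2
    simpa using h2

/-- sesquilinear form (slots 3,4) with vanishing diagonal vanishes. -/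
lemma polar34 (z w : V) (h : ∀ x : V, T.R z w x x = 0) (x y : V) : T.R z w x y = 0 := by
  have h1 : T.R z w x y + T.R z w y x = 0 := by
    have := h (x + y)
    simp only [T.map_add₃, T.map_add₄, h x, h y] at this
    linear_combination this
  have h2 : T.R z w x y - T.R z w y x = 0 := by
    have h0 := h (x + Complex.I • y)
    simp only [T.map_add₃, T.map_add₄, T.map_smul₃, T.map_smul₄, Complex.conj_I,
      h x, h y, mul_zero, add_zero, zero_add] at h0
    linear_combination Complex.I * h0 + (T.R z w x y - T.R z w y x) * Complex.I_sq
  linear_combination (h1 + h2) / 2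

end KahlerCurvatureTensor


namespace KahlerCurvatureTensor
variable {V : Type*} [NormedAddCommGroup V] [InnerProductSpace ℂ V]
variable (T : KahlerCurvatureTensor V)

lemma quartic_avg {n : ℕ} (e : Fin n → V) :
    (∑ θ : Fin n → Fin 4, T.R (∑ i, omegaPhase (θ i) • e i) (∑ i, omegaPhase (θ i) • e i)
        (∑ i, omegaPhase (θ i) • e i) (∑ i, omegaPhase (θ i) • e i))
      = (4:ℂ)^n * (2 * ∑ a, ∑ c, T.R (e a) (e a) (e c) (e c)
          - ∑ a, T.R (e a) (e a) (e a) (e a)) := by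
  classical
  have hexp : ∀ θ : Fin n → Fin 4,
      T.R (∑ i, omegaPhase (θ i) • e i) (∑ i, omegaPhase (θ i) • e i)
        (∑ i, omegaPhase (θ i) • e i) (∑ i, omegaPhase (θ i) • e i)
      = ∑ a, ∑ b, ∑ c, ∑ d,
          (omegaPhase (θ a) * (starRingEnd ℂ) (omegaPhase (θ b)) * omegaPhase (θ c)
            * (starRingEnd ℂ) (omegaPhase (θ d))) * T.R (e a) (e b) (e c) (e d) := by
    intro θ
    simp only [T.sum₁, T.map_smul₁, T.sum₂, T.map_smul₂, T.sum₃, T.map_smul₃, T.sum₄,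
      T.map_smul₄, Finset.mul_sum]
    refine Finset.sum_congr rfl fun a _ => Finset.sum_congr rfl fun b _ =>
      Finset.sum_congr rfl fun c _ => Finset.sum_congr rfl fun d _ => by ring
  rw [Finset.sum_congr rfl fun θ _ => hexp θ]
  have hswap : (∑ θ : Fin n → Fin 4, ∑ a, ∑ b, ∑ c, ∑ d,
          (omegaPhase (θ a) * (starRingEnd ℂ) (omegaPhase (θ b)) * omegaPhase (θ c)
            * (starRingEnd ℂ) (omegaPhase (θ d))) * T.R (e a) (e b) (e c) (e d))
      = ∑ a, ∑ b, ∑ c, ∑ d,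
          (if (a = b ∧ c = d) ∨ (a = d ∧ c = b) then (4:ℂ)^n else 0)
            * T.R (e a) (e b) (e c) (e d) := by
    rw [Finset.sum_comm]
    refine Finset.sum_congr rfl fun a _ => ?_
    rw [Finset.sum_comm]
    refine Finset.sum_congr rfl fun b _ => ?_
    rw [Finset.sum_comm]
    refine Finset.sum_congr rfl fun c _ => ?_
    rw [Finset.sum_comm]
    refine Finset.sum_congr rfl fun d _ => ?_
    rw [← Finset.sum_mul, coef_eval]
  rw [hswap]
  have hterm : ∀ a b c d : Fin n,
      (if (a = b ∧ c = d) ∨ (a = d ∧ c = b) then (4:ℂ)^n else 0) * T.R (e a) (e b) (e c) (e d)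
      = (4:ℂ)^n * ((if c = d then (if a = b then T.R (e a) (e b) (e c) (e d) else 0) else 0)
          + (if a = d then (if c = b then T.R (e a) (e b) (e c) (e d) else 0) else 0)
          - (if a = d then (if a = c then (if a = b then T.R (e a) (e b) (e c) (e d) else 0)
              else 0) else 0)) :=
    fun a b c d => ite_or_split a b c d ((4:ℂ)^n) (T.R (e a) (e b) (e c) (e d))
  simp only [hterm]
  simp only [← Finset.mul_sum]
  congr 1
  simp only [Finset.sum_add_distrib, Finset.sum_sub_distrib]
  have hA : ∀ a : Fin n, (∑ b, ∑ c, ∑ d,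
      (if c = d then (if a = b then T.R (e a) (e b) (e c) (e d) else 0) else 0))
      = ∑ c, T.R (e a) (e a) (e c) (e c) := by
    intro a
    simp only [Finset.sum_ite_eq, Finset.mem_univ, if_true]
    rw [Finset.sum_comm]
    simp only [Finset.sum_ite_eq, Finset.mem_univ, if_true]
  have hB : ∀ a : Fin n, (∑ b, ∑ c, ∑ d,
      (if a = d then (if c = b then T.R (e a) (e b) (e c) (e d) else 0) else 0))
      = ∑ b, T.R (e a) (e b) (e b) (e a) := by
    intro a
    simp only [Finset.sum_ite_eq, Finset.sum_ite_eq', Finset.mem_univ, if_true]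
  have hC : ∀ a : Fin n, (∑ b, ∑ c, ∑ d,
      (if a = d then (if a = c then (if a = b then T.R (e a) (e b) (e c) (e d) else 0)
        else 0) else 0))
      = T.R (e a) (e a) (e a) (e a) := by
    intro a
    simp only [Finset.sum_ite_eq, Finset.mem_univ, if_true]
  rw [Finset.sum_congr rfl fun a _ => hA a, Finset.sum_congr rfl fun a _ => hB a,
    Finset.sum_congr rfl fun a _ => hC a]
  have hex : ∀ a b : Fin n, T.R (e a) (e b) (e b) (e a) = T.R (e b) (e b) (e a) (e a) :=
    fun a b => T.symm_exch _ _ _ _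
  rw [Finset.sum_congr rfl fun a _ => Finset.sum_congr rfl fun b _ => hex a b]
  rw [show (∑ a : Fin n, ∑ b : Fin n, T.R (e b) (e b) (e a) (e a))
      = ∑ a : Fin n, ∑ b : Fin n, T.R (e a) (e a) (e b) (e b) from Finset.sum_comm]
  ring

end KahlerCurvatureTensor

/-- Semi-positive holomorphic sectional curvature gives non-negative scalar
curvature `S(R) = ∑_{i,j} R(e i, e i, e j, e j)`, and if moreover the
holomorphic sectional curvature is positive at some vector `v₀`, then
`S(R) > 0`. -/
theorem scalar_curvature_nonneg_and_pos
    {V : Type*} [NormedAddCommGroup V] [InnerProductSpace ℂ V]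
    [FiniteDimensional ℂ V]
    (n : ℕ) (hn : 1 ≤ n) (hdim : Module.finrank ℂ V = n)
    (T : KahlerCurvatureTensor V)
    (hsp : ∀ u : V, 0 ≤ (T.R u u u u).re)
    (e : Fin n → V) (he : Orthonormal ℂ e)
    (hspan : Submodule.span ℂ (Set.range e) = ⊤) :
    0 ≤ (∑ i : Fin n, ∑ j : Fin n, T.R (e i) (e i) (e j) (e j)).re ∧
    (∀ v₀ : V, 0 < (T.R v₀ v₀ v₀ v₀).re →
      0 < (∑ i : Fin n, ∑ j : Fin n, T.R (e i) (e i) (e j) (e j)).re) := by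
  classical
  have havg := T.quartic_avg e
  set S : ℂ := ∑ i : Fin n, ∑ j : Fin n, T.R (e i) (e i) (e j) (e j) with hSdef
  set D : ℂ := ∑ a : Fin n, T.R (e a) (e a) (e a) (e a) with hDdef
  have hp4 : (0:ℝ) < (4:ℝ)^n := by positivity
  have hAnonneg : 0 ≤ (∑ θ : Fin n → Fin 4,
      T.R (∑ i, omegaPhase (θ i) • e i) (∑ i, omegaPhase (θ i) • e i)
        (∑ i, omegaPhase (θ i) • e i) (∑ i, omegaPhase (θ i) • e i)).re := by
    rw [Complex.re_sum]
    exact Finset.sum_nonneg fun θ _ => hsp _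
  have hDre : D.re = ∑ a : Fin n, (T.R (e a) (e a) (e a) (e a)).re := by
    rw [hDdef, Complex.re_sum]
  have hDnonneg : 0 ≤ D.re := by
    rw [hDre]; exact Finset.sum_nonneg fun a _ => hsp _
  have hkey : (4:ℝ)^n * (2 * S.re - D.re)
      = (∑ θ : Fin n → Fin 4,
        T.R (∑ i, omegaPhase (θ i) • e i) (∑ i, omegaPhase (θ i) • e i)
          (∑ i, omegaPhase (θ i) • e i) (∑ i, omegaPhase (θ i) • e i)).re := by
    rw [havg]
    have h4c : (4:ℂ)^n = (((4:ℝ)^n : ℝ) : ℂ) := by push_cast; ring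
    rw [h4c, Complex.re_ofReal_mul]
    congr 1
    have h2c : (2:ℂ) * S = (((2:ℝ) : ℝ) : ℂ) * S := by norm_num
    rw [Complex.sub_re, h2c, Complex.re_ofReal_mul]
  have hSnonneg : 0 ≤ S.re := by
    nlinarith [hkey, hAnonneg, hDnonneg, hp4]
  refine ⟨hSnonneg, ?_⟩
  intro v₀ hv₀
  by_contra hpos
  push_neg at hpos
  have hS0 : S.re = 0 := le_antisymm hpos hSnonneg
  have hD0 : D.re = 0 := by nlinarith [hkey, hAnonneg, hp4, hDnonneg, hS0]
  -- each basis holomorphic sectional curvature vanishes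
  have hHe : ∀ i : Fin n, (T.R (e i) (e i) (e i) (e i)).re = 0 := by
    intro i
    have h0 : ∑ a : Fin n, (T.R (e a) (e a) (e a) (e a)).re = 0 := by rw [← hDre]; exact hD0
    exact (Finset.sum_eq_zero_iff_of_nonneg (fun a _ => hsp (e a))).mp h0 i (Finset.mem_univ i)
  have hdiag : ∀ (i : Fin n) (x : V), 0 ≤ (T.R (e i) (e i) x x).re :=
    fun i x => T.diag_nonneg_of_min hsp (hHe i) x
  have hSre : ∑ i : Fin n, ∑ j : Fin n, (T.R (e i) (e i) (e j) (e j)).re = 0 := by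
    have : S.re = ∑ i : Fin n, ∑ j : Fin n, (T.R (e i) (e i) (e j) (e j)).re := by
      rw [hSdef, Complex.re_sum]
      exact Finset.sum_congr rfl fun i _ => Complex.re_sum _ _
    rw [← this]; exact hS0
  have hij : ∀ i j : Fin n, (T.R (e i) (e i) (e j) (e j)).re = 0 := by
    intro i j
    have h1 := (Finset.sum_eq_zero_iff_of_nonneg
      (fun i _ => Finset.sum_nonneg fun j _ => hdiag i (e j))).mp hSre i (Finset.mem_univ i)
    exact (Finset.sum_eq_zero_iff_of_nonneg (fun j _ => hdiag i (e j))).mp h1 j (Finset.mem_univ j)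
  -- basis representation
  have hb : ∀ x : V, ∃ c : Fin n → ℂ, x = ∑ j, c j • e j := by
    intro x
    let b : Module.Basis (Fin n) ℂ V := Module.Basis.mk he.linearIndependent (by rw [hspan])
    refine ⟨fun j => b.repr x j, ?_⟩
    have h := b.sum_repr x
    have hbe : ∀ i, b i = e i := fun i => Module.Basis.mk_apply _ _ i
    rw [Finset.sum_congr rfl fun i _ => by rw [hbe i]] at h
    exact h.symm
  -- rows vanish
  have hrow : ∀ (i : Fin n) (x y : V), T.R (e i) (e i) x y = 0 := by
    intro i x y
    obtain ⟨c, hc⟩ := hb x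
    rw [hc, T.sum₃]
    refine Finset.sum_eq_zero fun j _ => ?_
    rw [T.map_smul₃, T.offdiag_zero (e i) (hdiag i) (hij i j) y, mul_zero]
  -- expansion of H(e a + c • e b)
  have hH : ∀ (a b : Fin n) (c : ℂ),
      T.R (e a + c • e b) (e a + c • e b) (e a + c • e b) (e a + c • e b)
      = c^2 * T.R (e b) (e a) (e b) (e a)
        + ((starRingEnd ℂ) c)^2 * T.R (e a) (e b) (e a) (e b) := by
    intro a b c
    rw [T.expand_two]
    have z1 : T.R (e b) (e a) (e a) (e a) = 0 := by rw [T.symm_exch]; exact hrow a _ _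
    have z2 : T.R (e a) (e a) (e b) (e a) = 0 := hrow a _ _
    have z3 : T.R (e a) (e b) (e a) (e a) = 0 := by rw [T.symm_pair]; exact hrow a _ _
    have z4 : T.R (e a) (e a) (e a) (e b) = 0 := hrow a _ _
    have z5 : T.R (e b) (e b) (e a) (e a) = 0 := hrow b _ _
    have z6 : T.R (e b) (e a) (e a) (e b) = 0 := by rw [T.symm_exch]; exact hrow a _ _
    have z7 : T.R (e a) (e b) (e b) (e a) = 0 := by rw [T.symm_exch]; exact hrow b _ _
    have z8 : T.R (e a) (e a) (e b) (e b) = 0 := hrow a _ _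
    have z9 : T.R (e b) (e b) (e b) (e a) = 0 := hrow b _ _
    have z10 : T.R (e b) (e a) (e b) (e b) = 0 := by rw [T.symm_pair]; exact hrow b _ _
    have z11 : T.R (e b) (e b) (e a) (e b) = 0 := hrow b _ _
    have z12 : T.R (e a) (e b) (e b) (e b) = 0 := by rw [T.symm_pair]; exact hrow b _ _
    have z13 : T.R (e a) (e a) (e a) (e a) = 0 := hrow a _ _
    have z14 : T.R (e b) (e b) (e b) (e b) = 0 := hrow b _ _
    rw [z1, z2, z3, z4, z5, z6, z7, z8, z9, z10, z11, z12, z13, z14]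
    ring
  have hβ : ∀ a b : Fin n, (T.R (e b) (e a) (e b) (e a)).re = 0 := by
    intro a b
    have hconj : T.R (e a) (e b) (e a) (e b)
        = (starRingEnd ℂ) (T.R (e b) (e a) (e b) (e a)) := (T.symm_conj _ _ _ _).symm
    have h1 := hsp (e a + (1:ℂ) • e b)
    rw [hH a b 1] at h1
    have h2 := hsp (e a + Complex.I • e b)
    rw [hH a b Complex.I] at h2
    simp only [one_pow, map_one, Complex.conj_I, one_mul, Complex.I_sq, neg_sq,
      Complex.add_re, Complex.neg_re, Complex.mul_re, Complex.neg_im,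
      Complex.conj_re, Complex.conj_im, Complex.one_re, Complex.one_im, hconj] at h1 h2
    linarith
  have hmin : ∀ (a b : Fin n) (c : ℂ), (c = 1 ∨ c = Complex.I ∨ c = -1 ∨ c = -Complex.I) →
      (T.R (e a + c • e b) (e a + c • e b) (e a + c • e b) (e a + c • e b)).re = 0 := by
    intro a b c hc
    rw [hH a b c]
    have hconj : T.R (e a) (e b) (e a) (e b)
        = (starRingEnd ℂ) (T.R (e b) (e a) (e b) (e a)) := (T.symm_conj _ _ _ _).symm
    have hβre := hβ a b
    rcases hc with rfl | rfl | rfl | rfl <;>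
      simp only [one_pow, map_one, map_neg, Complex.conj_I, neg_neg, one_mul, neg_sq,
        Complex.I_sq, neg_mul, hconj, Complex.add_re, Complex.neg_re, Complex.mul_re,
        Complex.conj_re, Complex.conj_im, Complex.one_re, Complex.one_im] <;>
      linarith
  have hz : ∀ (a b : Fin n) (x : V), T.R (e a) (e b) x x = 0 := by
    intro a b x
    have hcz : T.R (e b) (e a) x x = (starRingEnd ℂ) (T.R (e a) (e b) x x) :=
      (T.symm_conj (e a) (e b) x x).symm
    have key : ∀ c : ℂ, (c = 1 ∨ c = Complex.I ∨ c = -1 ∨ c = -Complex.I) →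
        0 ≤ ((starRingEnd ℂ) c * T.R (e a) (e b) x x
          + c * (starRingEnd ℂ) (T.R (e a) (e b) x x)).re := by
      intro c hc
      have h0 := T.diag_nonneg_of_min hsp (hmin a b c hc) x
      have hex : T.R (e a + c • e b) (e a + c • e b) x x
          = (starRingEnd ℂ) c * T.R (e a) (e b) x x
            + c * (starRingEnd ℂ) (T.R (e a) (e b) x x) := by
        simp only [T.map_add₁, T.map_add₂, T.map_smul₁, T.map_smul₂]
        rw [hrow a x x, hrow b x x, hcz]
        ring
      rw [hex] at h0
      exact h0
    have h1 := key 1 (Or.inl rfl)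
    have h2 := key (-1) (Or.inr (Or.inr (Or.inl rfl)))
    have h3 := key Complex.I (Or.inr (Or.inl rfl))
    have h4 := key (-Complex.I) (Or.inr (Or.inr (Or.inr rfl)))
    simp only [map_one, map_neg, Complex.conj_I, one_mul, neg_mul, neg_neg,
      Complex.add_re, Complex.neg_re, Complex.mul_re, Complex.conj_re, Complex.conj_im,
      Complex.I_re, Complex.I_im, Complex.one_re, Complex.one_im] at h1 h2 h3 h4
    apply Complex.ext <;> simp only [Complex.zero_re, Complex.zero_im] <;> linarith
  have hzz : ∀ (a b : Fin n) (x y : V), T.R (e a) (e b) x y = 0 :=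
    fun a b x y => T.polar34 (e a) (e b) (hz a b) x y
  obtain ⟨c, hc⟩ := hb v₀
  have hfinal : T.R v₀ v₀ v₀ v₀ = 0 := by
    rw [hc, T.sum₁]
    refine Finset.sum_eq_zero fun a _ => ?_
    rw [T.map_smul₁, T.sum₂]
    rw [Finset.mul_sum]
    refine Finset.sum_eq_zero fun b _ => ?_
    rw [T.map_smul₂, hzz a b]
    ring
  rw [hfinal] at hv₀
  simp at hv₀
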